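/- Let q = 2^m for a positive integer m. Then f(x) = x^4 + x^{q^2+4} + x^{4q+1} + x^{4q^2+1} + x^{q+4} is a permutation polynomial of F_{q^3} if and only if m is odd. -/
import Mathlib

private def trq (q : ℕ) {F : Type*} [Field F] (x : F) : F := x + x ^ q + (x ^ q) ^ q

private lemma two_pow_mod_three (n : ℕ) : 2 ^ n % 3 = if n % 2 = 0 then 1 else 2 := by
  induction n with
  | zero => rfl
  | succ k ih =>
    rw [pow_succ, Nat.mul_mod, ih]
    rcases Nat.mod_two_eq_zero_or_one k with h | h
    · have h1 : (k+1) % 2 = 1 := by omega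
      simp [h, h1]
    · have h1 : (k+1) % 2 = 0 := by omega
      simp [h, h1]

theorem stmt_6 (m : ℕ) (hm : 0 < m) (q : ℕ) (hq : q = 2 ^ m)
    (F : Type*) [Field F] [Fintype F] (hF : Fintype.card F = q ^ 3) :
    Function.Bijective
      (fun x : F => x ^ 4 + x ^ (q ^ 2 + 4) + x ^ (4 * q + 1) + x ^ (4 * q ^ 2 + 1) + x ^ (q + 4))
      ↔ Odd m := by
  have hq2le : 2 ≤ q := by
    rw [hq]
    calc 2 = 2 ^ 1 := (pow_one 2).symm
    _ ≤ 2 ^ m := Nat.pow_le_pow_right (by norm_num) hm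
  have hq3card : q ^ 3 = 2 ^ (3 * m) := by rw [hq, ← pow_mul, mul_comm]
  -- characteristic 2
  haveI hchar : CharP F 2 := by
    obtain ⟨p, hp_char⟩ := CharP.exists F
    haveI := hp_char
    have hp : p.Prime := CharP.char_is_prime F p
    obtain ⟨n, -, hcard'⟩ := FiniteField.card F p
    have hp2 : p = 2 := by
      have hdvd : p ∣ 2 ^ (3 * m) := by
        rw [← hq3card, ← hF, hcard']
        exact dvd_pow_self p n.pos.ne'
      exact (Nat.prime_dvd_prime_iff_eq hp Nat.prime_two).mp (hp.dvd_of_dvd_pow hdvd)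
    rwa [hp2] at hp_char
  haveI : Fact (Nat.Prime 2) := ⟨Nat.prime_two⟩
  have h2 : (2 : F) = 0 := by exact_mod_cast CharP.cast_eq_zero F 2
  have hq2 : ∀ x y : F, (x + y) ^ q = x ^ q + y ^ q := by
    intro x y; rw [hq]; exact add_pow_char_pow x y 2 m
  have h4 : ∀ x y : F, (x + y) ^ 4 = x ^ 4 + y ^ 4 := by
    intro x y
    have := add_pow_char_pow x y 2 2
    norm_num at this
    exact this
  have hx3 : ∀ x : F, ((x ^ q) ^ q) ^ q = x := by
    intro x
    have h : ((x ^ q) ^ q) ^ q = x ^ (q ^ 3) := by ring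
    rw [h, ← hF]
    exact FiniteField.pow_card x
  -- basic trace facts
  have htexp : ∀ x : F, trq q x = x + x ^ q + (x ^ q) ^ q := fun x => rfl
  have htq : ∀ x : F, (trq q x) ^ q = trq q x := by
    intro x
    rw [htexp, hq2, hq2, hx3 x]
    ring
  have htadd : ∀ x y : F, trq q (x + y) = trq q x + trq q y := by
    intro x y
    rw [htexp, htexp, htexp, hq2 x y, hq2 (x ^ q) (y ^ q)]
    ring
  have hT4 : ∀ x : F, (trq q x) ^ 4 = x ^ 4 + (x ^ q) ^ 4 + ((x ^ q) ^ q) ^ 4 := by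
    intro x
    rw [htexp, h4, h4]
  -- the key identity : f x = (1 + T x) * x^4 + (T x)^4 * x
  have key : ∀ x : F,
      x ^ 4 + x ^ (q ^ 2 + 4) + x ^ (4 * q + 1) + x ^ (4 * q ^ 2 + 1) + x ^ (q + 4)
        = (1 + trq q x) * x ^ 4 + (trq q x) ^ 4 * x := by
    intro x
    linear_combination (-x) * hT4 x + (-(x^4)) * htexp x + (-(x^5)) * h2
  -- the q-power of g-shaped expressions
  have hstep : ∀ y T : F, T ^ q = T →
      ((1 + T) * y ^ 4 + T ^ 4 * y) ^ q = (1 + T) * (y ^ q) ^ 4 + T ^ 4 * y ^ q := by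
    intro y T hT
    rw [hq2, mul_pow, mul_pow, hq2 1 T, one_pow, hT, pow_right_comm y 4 q,
      pow_right_comm T 4 q, hT]
  -- trace of g x is (T x)^4
  have htrg : ∀ x : F, trq q ((1 + trq q x) * x ^ 4 + (trq q x) ^ 4 * x) = (trq q x) ^ 4 := by
    intro x
    have hA := htq x
    rw [htexp ((1 + trq q x) * x ^ 4 + (trq q x) ^ 4 * x), hstep x (trq q x) hA,
      hstep (x ^ q) (trq q x) hA]
    linear_combination (-(1 + trq q x)) * hT4 x - (trq q x) ^ 4 * htexp x + (trq q x) ^ 5 * h2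

  -- now the two directions
  constructor
  · -- Bijective → Odd m
    intro hbij
    by_contra hodd
    have hmeven : m % 2 = 0 := by
      rw [Nat.odd_iff] at hodd
      omega
    have hqmod : q % 3 = 1 := by
      rw [hq, two_pow_mod_three]
      simp [hmeven]
    have hq2mod : q ^ 2 % 3 = 1 := by rw [Nat.pow_mod, hqmod]
    have h3q1 : 3 ∣ q - 1 := by omega
    have h3q2 : 3 ∣ q ^ 2 + q + 1 := by omega
    have hq4 : 4 ≤ q := by
      rw [hq]
      calc 4 = 2 ^ 2 := rfl
      _ ≤ 2 ^ m := Nat.pow_le_pow_right (by norm_num) (by omega)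
    have hfact : (q - 1) * (q ^ 2 + q + 1) = q ^ 3 - 1 := by
      apply Nat.eq_sub_of_add_eq
      obtain ⟨k, rfl⟩ : ∃ k, q = k + 2 := ⟨q - 2, by omega⟩
      have h1 : k + 2 - 1 = k + 1 := by omega
      rw [h1]; ring
    haveI : DecidableEq F := Classical.decEq F
    obtain ⟨g, hg⟩ := IsCyclic.exists_generator (α := Fˣ)
    have hog : orderOf g = q ^ 3 - 1 := by
      rw [orderOf_eq_card_of_forall_mem_zpowers hg, Nat.card_eq_fintype_card,
        Fintype.card_units, hF]
    have hk3 : 3 * ((q ^ 2 + q + 1) / 3) = q ^ 2 + q + 1 := Nat.mul_div_cancel' h3q2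
    set v : Fˣ := g ^ ((q ^ 2 + q + 1) / 3) with hv_def
    set u : Fˣ := g ^ (q ^ 2 + q + 1) with hu_def
    have huv : v ^ 3 = u := by rw [hv_def, hu_def, ← pow_mul, mul_comm, hk3]
    have hdvd321 : (q ^ 2 + q + 1) ∣ (q ^ 3 - 1) := ⟨q - 1, by rw [← hfact]; ring⟩
    have hou : orderOf u = q - 1 := by
      rw [hu_def, orderOf_pow, hog, Nat.gcd_eq_right hdvd321, ← hfact,
        Nat.mul_div_cancel _ (Nat.succ_pos _)]
    have huq : u ^ q = u := by
      have h1 : u ^ (q - 1) = 1 := by rw [← hou]; exact pow_orderOf_eq_one u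
      calc u ^ q = u ^ (q - 1 + 1) := by congr 1; omega
      _ = u ^ (q - 1) * u := pow_succ u (q - 1)
      _ = u := by rw [h1, one_mul]
    set s : F := (u : F) with hs_def
    have hsq : s ^ q = s := by rw [hs_def, ← Units.val_pow_eq_pow_val, huq]
    have hs0 : s ≠ 0 := Units.ne_zero u
    have hu1 : u ≠ 1 := by
      intro h
      rw [h, orderOf_one] at hou
      omega
    have hs1 : s ≠ 1 := fun h => hu1 (Units.val_eq_one.mp h)
    have noncube : ∀ w : F, w ^ q = w → w ^ 3 ≠ s := by
      intro w hw hw3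
      have hw0 : w ≠ 0 := by
        rintro rfl
        rw [zero_pow (by norm_num)] at hw3
        exact hs0 hw3.symm
      have hwq1 : w ^ (q - 1) = 1 := by
        have hh : w ^ (q - 1) * w = 1 * w := by
          rw [← pow_succ, one_mul]
          calc w ^ (q - 1 + 1) = w ^ q := by congr 1; omega
          _ = w := hw
        exact mul_right_cancel₀ hw0 hh
      set W : Fˣ := Units.mk0 w hw0 with hW_def
      have hW3 : W ^ 3 = u := by
        apply Units.ext
        rw [Units.val_pow_eq_pow_val]
        exact hw3
      have hWq : W ^ (q - 1) = 1 := by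
        apply Units.ext
        rw [Units.val_pow_eq_pow_val, Units.val_one]
        exact hwq1
      have hu1' : u ^ ((q - 1) / 3) = 1 := by
        rw [← hW3, ← pow_mul, Nat.mul_div_cancel' h3q1, hWq]
      have hdvd := orderOf_dvd_of_pow_eq_one hu1'
      rw [hou] at hdvd
      have hle := Nat.le_of_dvd (by omega) hdvd
      have hlt : (q - 1) / 3 < q - 1 := Nat.div_lt_self (by omega) (by omega)
      omega
    set t : F := s * (1 + s)⁻¹ with ht_def
    have h1s : (1 : F) + s ≠ 0 := by
      intro h
      exact hs1 (by linear_combination h - h2)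
    have hts : t * (1 + s) = s := by
      rw [ht_def, mul_assoc, inv_mul_cancel₀ h1s, mul_one]
    have ht0 : t ≠ 0 := by
      intro h
      rw [h, zero_mul] at hts
      exact hs0 hts.symm
    have htq2 : t ^ q = t := by
      rw [ht_def, mul_pow, inv_pow, hq2 1 s, one_pow, hsq]
    have h1t : (1 + t) * (1 + s) = 1 := by linear_combination hts + s * h2
    have h1t0 : (1 : F) + t ≠ 0 := by
      intro h
      rw [h, zero_mul] at h1t
      exact zero_ne_one h1t
    have hts2 : (1 + t) * s = t := by linear_combination h1t - t * h2
    have hkey : (1 + t) * (s * t ^ 3) = t ^ 4 := by linear_combination t ^ 3 * hts2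
    have hv0 : ((v : F)) ≠ 0 := Units.ne_zero v
    set z : F := (v : F) * t with hz_def
    have hz0 : z ≠ 0 := mul_ne_zero hv0 ht0
    have hv3 : ((v : F)) ^ 3 = s := by
      rw [← Units.val_pow_eq_pow_val, huv, hs_def]
    have hz3 : z ^ 3 = s * t ^ 3 := by rw [hz_def, mul_pow, hv3]
    have hzqz : z ^ q ≠ z := by
      intro h
      apply noncube (v : F) ?_ hv3
      have hv_eq : (v : F) = z * t⁻¹ := by
        rw [hz_def, mul_assoc, mul_inv_cancel₀ ht0, mul_one]
      rw [hv_eq, mul_pow, inv_pow, htq2, h]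
    have hz3q : (z ^ 3) ^ q = z ^ 3 := by
      rw [hz3, mul_pow, hsq, pow_right_comm, htq2]
    set η : F := z ^ q * z⁻¹ with hη_def
    have hz30 : z ^ 3 ≠ 0 := pow_ne_zero 3 hz0
    have hη3 : η ^ 3 = 1 := by
      rw [hη_def, mul_pow, inv_pow, pow_right_comm z q 3, hz3q, mul_inv_cancel₀ hz30]
    have hηz : η * z = z ^ q := by rw [hη_def, mul_assoc, inv_mul_cancel₀ hz0, mul_one]
    have hη1 : η ≠ 1 := by
      intro h
      rw [h, one_mul] at hηz
      exact hzqz hηz.symm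
    have hηsum : 1 + η + η ^ 2 = 0 := by
      have hprod : (1 + η) * (1 + η + η ^ 2) = 0 := by
        linear_combination hη3 + (1 + η + η ^ 2) * h2
      rcases mul_eq_zero.mp hprod with h | h
      · exact absurd (by linear_combination h - h2 : η = 1) hη1
      · exact h
    obtain ⟨j, hj⟩ := h3q1
    have hqj : q = 3 * j + 1 := by omega
    have hηq : η ^ q = η := by
      rw [hqj, pow_succ, pow_mul, hη3, one_pow, one_mul]
    have hzqq : (z ^ q) ^ q = η ^ 2 * z := by
      rw [← hηz, mul_pow, hηq, ← hηz]
      ring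
    have hTz : trq q z = 0 := by
      rw [htexp, hzqq, ← hηz]
      linear_combination z * hηsum
    have hTt : trq q t = t := by
      rw [htexp, htq2, htq2]
      linear_combination t * h2
    have hTtz : trq q (t + z) = t := by rw [htadd, hTz, hTt, add_zero]
    have hne : t + z ≠ t := by
      intro h
      exact hz0 (by linear_combination h)
    apply hne
    apply hbij.injective
    show (t + z) ^ 4 + (t + z) ^ (q ^ 2 + 4) + (t + z) ^ (4 * q + 1)
        + (t + z) ^ (4 * q ^ 2 + 1) + (t + z) ^ (q + 4)
        = t ^ 4 + t ^ (q ^ 2 + 4) + t ^ (4 * q + 1) + t ^ (4 * q ^ 2 + 1) + t ^ (q + 4)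
    rw [key (t + z), key t, hTtz, hTt, h4 t z]
    linear_combination (z * (1 + t)) * hz3 + z * hkey + z * t ^ 4 * h2
  · -- Odd m → Bijective
    intro hodd
    rw [← Finite.injective_iff_bijective]
    intro x y hxy
    replace hxy : x ^ 4 + x ^ (q ^ 2 + 4) + x ^ (4 * q + 1) + x ^ (4 * q ^ 2 + 1) + x ^ (q + 4)
        = y ^ 4 + y ^ (q ^ 2 + 4) + y ^ (4 * q + 1) + y ^ (4 * q ^ 2 + 1) + y ^ (q + 4) := hxy
    rw [key x, key y] at hxy
    have hmod : 2 ^ (3 * m) % 3 = 2 := by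
      rw [two_pow_mod_three]
      have h1 : (3 * m) % 2 = 1 := by
        rw [Nat.odd_iff] at hodd
        omega
      simp [h1]
    have hnot3 : ¬ (3 ∣ q ^ 3 - 1) := by
      rw [hq3card]
      have hge : 1 ≤ 2 ^ (3 * m) := Nat.one_le_two_pow
      omega
    have hTeq : trq q x = trq q y := by
      have h1 : trq q ((1 + trq q x) * x ^ 4 + (trq q x) ^ 4 * x)
          = trq q ((1 + trq q y) * y ^ 4 + (trq q y) ^ 4 * y) := by rw [hxy]
      rw [htrg x, htrg y] at h1
      have h0 : (trq q x + trq q y) ^ 4 = 0 := by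
        rw [h4]
        linear_combination h1 + (trq q y) ^ 4 * h2
      have hzz := (pow_eq_zero_iff (n := 4) (by norm_num)).mp h0
      linear_combination hzz - trq q y * h2
    by_contra hne
    set t : F := trq q y with ht_def
    rw [hTeq] at hxy
    set z : F := x + y with hz_def
    have hz0 : z ≠ 0 := by
      rw [hz_def]
      intro h
      exact hne (by linear_combination h - y * h2)
    have hzz : (1 + t) * z ^ 4 = t ^ 4 * z := by
      rw [hz_def, h4]
      linear_combination hxy + ((1 + t) * y ^ 4 - t ^ 4 * x) * h2
    have hzz3 : (1 + t) * z ^ 3 = t ^ 4 := by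
      have hh : ((1 + t) * z ^ 3) * z = t ^ 4 * z := by rw [← hzz]; ring
      exact mul_right_cancel₀ hz0 hh
    have ht0 : t ≠ 0 := by
      intro h
      rw [h] at hzz3
      have hz3 : z ^ 3 = 0 := by linear_combination hzz3
      exact hz0 ((pow_eq_zero_iff (by norm_num)).mp hz3)
    have h1t0 : (1 : F) + t ≠ 0 := by
      intro h
      rw [h, zero_mul] at hzz3
      exact ht0 ((pow_eq_zero_iff (n := 4) (by norm_num)).mp hzz3.symm)
    have htqt : t ^ q = t := by rw [ht_def]; exact htq y
    have hz3q : (1 + t) * (z ^ q) ^ 3 = t ^ 4 := by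
      have hh : ((1 + t) * z ^ 3) ^ q = (t ^ 4) ^ q := by rw [hzz3]
      rw [mul_pow, hq2 1 t, one_pow, htqt, pow_right_comm z 3 q, pow_right_comm t 4 q, htqt] at hh
      exact hh
    have hcube : (z ^ q) ^ 3 = z ^ 3 := mul_left_cancel₀ h1t0 (hz3q.trans hzz3.symm)
    set c : F := z ^ q * z⁻¹ with hc_def
    have hzq0 : z ^ q ≠ 0 := pow_ne_zero q hz0
    have hc0 : c ≠ 0 := mul_ne_zero hzq0 (inv_ne_zero hz0)
    have hc3 : c ^ 3 = 1 := by
      rw [hc_def, mul_pow, inv_pow, hcube, mul_inv_cancel₀ (pow_ne_zero 3 hz0)]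
    have hcN : c ^ (q ^ 3 - 1) = 1 := by
      rw [← hF]
      exact FiniteField.pow_card_sub_one_eq_one c hc0
    have hord3 := orderOf_dvd_of_pow_eq_one hc3
    have hordN := orderOf_dvd_of_pow_eq_one hcN
    have hc1 : c = 1 := by
      rcases (Nat.dvd_prime Nat.prime_three).mp hord3 with h | h
      · exact orderOf_eq_one_iff.mp h
      · exact absurd (h ▸ hordN) hnot3
    have hzq : z ^ q = z := by
      rw [hc_def] at hc1
      exact (mul_inv_eq_one₀ hz0).mp hc1
    have hTz0 : trq q z = 0 := by
      rw [hz_def, htadd, hTeq, ← ht_def]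
      linear_combination t * h2
    rw [htexp, hzq, hzq] at hTz0
    exact hz0 (by linear_combination hTz0 - z * h2)
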